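/- arXiv:1910.04137 — 6 statements merged into one kernel-verified Lean document; each statement's English description precedes it below -/
import Mathlib

section
/- ε-differential privacy of the Laplace mechanism for measurable sets: let ε > 0, k > 0, and μ₁, μ₂ ∈ ℝ with |μ₁ - μ₂| ≤ k. Then for every Borel set S ⊆ ℝ, ∫_S (ε/(2k))·e^{-(ε/k)·|x - μ₁|} dx ≤ e^{ε} · ∫_S (ε/(2k))·e^{-(ε/k)·|x - μ₂|} dx. -/
open MeasureTheory Set

lemma integrable_exp_neg_abs' {b : ℝ} (hb : 0 < b) :
    Integrable (fun x : ℝ => Real.exp (-b * |x|)) := by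
  have hIci : IntegrableOn (fun x : ℝ => Real.exp (-b * |x|)) (Ici 0) := by
    rw [integrableOn_Ici_iff_integrableOn_Ioi]
    refine (exp_neg_integrableOn_Ioi 0 hb).congr_fun (fun x hx => ?_) measurableSet_Ioi
    rw [abs_of_nonneg (le_of_lt hx)]
  rw [← integrableOn_univ, ← @Iio_union_Ici _ _ (0 : ℝ), integrableOn_union]
  refine ⟨?_, hIci⟩
  rw [← (Measure.measurePreserving_neg (volume : Measure ℝ)).integrableOn_comp_preimage
      (Homeomorph.neg ℝ).measurableEmbedding]
  simp only [Function.comp_def, abs_neg, neg_preimage, neg_Iio, neg_neg, neg_zero]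
  exact hIci.mono_set Ioi_subset_Ici_self

lemma integrable_laplace' (b μ : ℝ) (hb : 0 < b) :
    Integrable (fun x : ℝ => Real.exp (-b * |x - μ|)) :=
  (integrable_exp_neg_abs' hb).comp_sub_right μ

/-- ε-differential privacy of the Laplace mechanism for measurable sets. -/
theorem laplace_mechanism_diff_private (ε k : ℝ) (hε : 0 < ε) (hk : 0 < k)
    (μ₁ μ₂ : ℝ) (hadj : |μ₁ - μ₂| ≤ k) :
    ∀ S : Set ℝ, MeasurableSet S →
      (∫ x in S, (ε / (2 * k)) * Real.exp (-(ε / k) * |x - μ₁|)) ≤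
        Real.exp ε * ∫ x in S, (ε / (2 * k)) * Real.exp (-(ε / k) * |x - μ₂|) := by
  intro S hS
  have hb : 0 < ε / k := div_pos hε hk
  have hc : 0 ≤ ε / (2 * k) := by positivity
  have hint1 : IntegrableOn (fun x => (ε / (2 * k)) * Real.exp (-(ε / k) * |x - μ₁|)) S :=
    (((integrable_laplace' _ μ₁ hb).const_mul _).integrableOn)
  have hint2 : IntegrableOn
      (fun x => Real.exp ε * ((ε / (2 * k)) * Real.exp (-(ε / k) * |x - μ₂|))) S :=
    ((((integrable_laplace' _ μ₂ hb).const_mul _).const_mul _).integrableOn)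
  rw [← integral_const_mul]
  refine setIntegral_mono_on hint1 hint2 hS (fun x _ => ?_)
  rw [← mul_assoc, mul_comm (Real.exp ε), mul_assoc]
  refine mul_le_mul_of_nonneg_left ?_ hc
  rw [← Real.exp_add]
  apply Real.exp_le_exp.2
  have h1 : |x - μ₁| ≥ |x - μ₂| - k := by
    have := abs_sub_abs_le_abs_sub (x - μ₂) (x - μ₁)
    have h2 : |x - μ₂ - (x - μ₁)| = |μ₁ - μ₂| := by rw [show x - μ₂ - (x - μ₁) = μ₁ - μ₂ by ring]
    nlinarith [abs_nonneg (x - μ₂), abs_nonneg (μ₁ - μ₂)]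
  have hεk : ε / k * k = ε := div_mul_cancel₀ ε (ne_of_gt hk)
  nlinarith [mul_le_mul_of_nonneg_left h1 (le_of_lt hb)]
end

section
/- ε-differential privacy of the discrete Laplace mechanism: let ε > 0 and integers μ₁, μ₂ with |μ₁ - μ₂| ≤ k (k a positive integer). Then for every set S ⊆ ℤ, Σ_{i ∈ S} ((1-e^{-ε/k})/(1+e^{-ε/k}))·e^{-(ε/k)·|i-μ₁|} ≤ e^{ε} · Σ_{i ∈ S} ((1-e^{-ε/k})/(1+e^{-ε/k}))·e^{-(ε/k)·|i-μ₂|}. -/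
lemma summable_exp_neg_abs_int (lam : ℝ) (hl : 0 < lam) (μ : ℤ) :
    Summable (fun i : ℤ => Real.exp (-lam * |(i : ℝ) - (μ : ℝ)|)) := by
  rw [← (Equiv.addRight μ).summable_iff]
  have hgeo : Summable (fun n : ℕ => (Real.exp (-lam)) ^ n) :=
    summable_geometric_of_lt_one (Real.exp_nonneg _)
      (Real.exp_lt_one_iff.mpr (by linarith))
  apply Summable.of_nat_of_neg
  · refine hgeo.congr fun n => ?_
    rw [← Real.exp_nat_mul]
    simp only [Function.comp, Equiv.coe_addRight]
    push_cast
    rw [add_sub_cancel_right, abs_of_nonneg (Nat.cast_nonneg n : (0:ℝ) ≤ n)]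
    ring_nf
  · refine hgeo.congr fun n => ?_
    rw [← Real.exp_nat_mul]
    simp only [Function.comp, Equiv.coe_addRight]
    push_cast
    rw [add_sub_cancel_right, abs_neg, abs_of_nonneg (Nat.cast_nonneg n : (0:ℝ) ≤ n)]
    ring_nf

/-- ε-differential privacy of the discrete Laplace mechanism. -/
theorem discrete_laplace_mechanism_diff_private (ε : ℝ) (hε : 0 < ε) (k : ℕ)
    (hk : 0 < k) (μ₁ μ₂ : ℤ) (hadj : |μ₁ - μ₂| ≤ (k : ℤ)) (S : Set ℤ) :
    (∑' i : S, ((1 - Real.exp (-(ε / k))) / (1 + Real.exp (-(ε / k)))) *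
        Real.exp (-(ε / k) * |((i : ℤ) : ℝ) - (μ₁ : ℝ)|)) ≤
      Real.exp ε *
        ∑' i : S, ((1 - Real.exp (-(ε / k))) / (1 + Real.exp (-(ε / k)))) *
          Real.exp (-(ε / k) * |((i : ℤ) : ℝ) - (μ₂ : ℝ)|) := by
  set lam : ℝ := ε / k with hlam
  have hkpos : (0:ℝ) < k := by exact_mod_cast hk
  have hlpos : 0 < lam := div_pos hε hkpos
  have hlk : lam * k = ε := div_mul_cancel₀ ε (ne_of_gt hkpos)
  set C : ℝ := (1 - Real.exp (-lam)) / (1 + Real.exp (-lam)) with hC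
  have hC0 : 0 ≤ C := by
    apply div_nonneg
    · linarith [Real.exp_lt_one_iff.mpr (by linarith : -lam < 0)]
    · positivity
  have hsum1 : Summable (fun i : S => C * Real.exp (-lam * |((i : ℤ) : ℝ) - (μ₁ : ℝ)|)) :=
    (((summable_exp_neg_abs_int lam hlpos μ₁).mul_left C).subtype S)
  have hsum2 : Summable (fun i : S => C * Real.exp (-lam * |((i : ℤ) : ℝ) - (μ₂ : ℝ)|)) :=
    (((summable_exp_neg_abs_int lam hlpos μ₂).mul_left C).subtype S)
  rw [← tsum_mul_left]
  refine Summable.tsum_le_tsum ?_ hsum1 (hsum2.mul_left _)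
  intro i
  rw [mul_comm (Real.exp ε), mul_assoc]
  apply mul_le_mul_of_nonneg_left _ hC0
  rw [← Real.exp_add, Real.exp_le_exp]
  have habs : |((i : ℤ) : ℝ) - μ₂| - |((i : ℤ) : ℝ) - μ₁| ≤ (k : ℝ) := by
    have h1 : |((i : ℤ) : ℝ) - μ₂| - |((i : ℤ) : ℝ) - μ₁| ≤ |(μ₁ : ℝ) - μ₂| := by
      have := abs_sub_abs_le_abs_sub (((i : ℤ) : ℝ) - μ₂) (((i : ℤ) : ℝ) - μ₁)
      rwa [show ((i : ℤ) : ℝ) - μ₂ - (((i : ℤ) : ℝ) - μ₁) = μ₁ - μ₂ by ring] at this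
    have h2 : |(μ₁ : ℝ) - μ₂| ≤ (k : ℝ) := by exact_mod_cast hadj
    linarith
  nlinarith [abs_nonneg (((i : ℤ) : ℝ) - μ₁), abs_nonneg (((i : ℤ) : ℝ) - μ₂)]
end

section
/- 2kε-differential privacy of the exponential mechanism: let V be a nonempty finite set, ε > 0, k ≥ 0, and let F₁, F₂ : V → ℝ satisfy |F₁(v) - F₂(v)| ≤ k for all v ∈ V. Then for every v ∈ V, e^{ε·F₁(v)} / (Σ_{w ∈ V} e^{ε·F₁(w)}) ≤ e^{2kε} · e^{ε·F₂(v)} / (Σ_{w ∈ V} e^{ε·F₂(w)}). -/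
open Finset

/-- 2kε-differential privacy of the exponential mechanism. -/
theorem exponential_mechanism_diff_private {V : Type*} [Fintype V] [Nonempty V]
    (ε k : ℝ) (hε : 0 < ε) (hk : 0 ≤ k) (F₁ F₂ : V → ℝ)
    (hsens : ∀ v : V, |F₁ v - F₂ v| ≤ k) :
    ∀ v : V,
      Real.exp (ε * F₁ v) / (∑ w : V, Real.exp (ε * F₁ w)) ≤
        Real.exp (2 * k * ε) *
          (Real.exp (ε * F₂ v) / (∑ w : V, Real.exp (ε * F₂ w))) := by
  intro v
  have hS₁ : 0 < ∑ w : V, Real.exp (ε * F₁ w) :=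
    Finset.sum_pos (fun w _ => Real.exp_pos _) univ_nonempty
  have hS₂ : 0 < ∑ w : V, Real.exp (ε * F₂ w) :=
    Finset.sum_pos (fun w _ => Real.exp_pos _) univ_nonempty
  have h1 : Real.exp (ε * F₁ v) ≤ Real.exp (k * ε) * Real.exp (ε * F₂ v) := by
    rw [← Real.exp_add]
    apply Real.exp_le_exp.2
    have := (abs_le.1 (hsens v)).2
    nlinarith
  have h2 : ∑ w : V, Real.exp (ε * F₂ w) ≤ Real.exp (k * ε) * ∑ w : V, Real.exp (ε * F₁ w) := by
    rw [Finset.mul_sum]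
    apply Finset.sum_le_sum
    intro w _
    rw [← Real.exp_add]
    apply Real.exp_le_exp.2
    have := (abs_le.1 (hsens w)).1
    nlinarith
  rw [div_le_iff₀ hS₁]
  have key : Real.exp (2 * k * ε) = Real.exp (k * ε) * Real.exp (k * ε) := by
    rw [← Real.exp_add]; ring_nf
  calc Real.exp (ε * F₁ v)
      ≤ Real.exp (k * ε) * Real.exp (ε * F₂ v) := h1
    _ ≤ Real.exp (2 * k * ε) * (Real.exp (ε * F₂ v) / (∑ w : V, Real.exp (ε * F₂ w))) *
          (∑ w : V, Real.exp (ε * F₁ w)) := by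
        rw [key, mul_div_assoc', div_mul_eq_mul_div, le_div_iff₀ hS₂]
        nlinarith [Real.exp_pos (k*ε), Real.exp_pos (ε * F₂ v), mul_le_mul_of_nonneg_left h2 (mul_pos (Real.exp_pos (k*ε)) (Real.exp_pos (ε * F₂ v))).le]
end

section
/- Multidimensional simple linear set probability: let ε > 0, let a₁,...,aₙ be positive rationals, let Y₁,...,Yₙ be independent random variables with Yⱼ ~ DLap(aⱼε, 0), let b̄₀, p̄₁,...,p̄ₘ ∈ ℕⁿ, and suppose each element of S = {b̄₀ + Σᵢ kᵢ·p̄ᵢ : k₁,...,kₘ ∈ ℕ} has a unique such representation with p̄ᵢ·ā > 0 for all i (where ā = (a₁,...,aₙ) and · is the dot product). Then Prob((Y₁,...,Yₙ) ∈ S) = κ · e^{-ε·(b̄₀·ā)} · Πᵢ₌₁ᵐ 1/(1 - e^{-ε·(p̄ᵢ·ā)}), where κ = Πⱼ₌₁ⁿ (1-e^{-aⱼε})/(1+e^{-aⱼε}). -/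
open Finset

/-!
Since the parametrisation `k ↦ b̄₀ + Σᵢ kᵢ p̄ᵢ` of `S` is injective, the sum over `S` is a sum over
`k ∈ ℕᵐ`. The weight of the point with parameter `k` factors as
`κ · e^{-ε (b̄₀·ā)} · Πᵢ rᵢ^{kᵢ}` with `rᵢ = e^{-ε (p̄ᵢ·ā)} < 1`, and the sum over `ℕᵐ` of
`Πᵢ rᵢ^{kᵢ}` is a product of `m` geometric series.
-/

theorem hasSum_fin_prod_of_nonneg {α : Type*} {m : ℕ} {f : Fin m → α → ℝ}
    (hf₀ : ∀ i x, 0 ≤ f i x) (hf : ∀ i, Summable (f i)) :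
    HasSum (fun x : Fin m → α => ∏ i, f i (x i)) (∏ i, ∑' x, f i x) := by
  induction m with
  | zero => simp
  | succ m ih =>
    have htail := ih (fun i => hf₀ i.succ) (fun i => hf i.succ)
    have hprod : Summable fun q : α × (Fin m → α) => f 0 q.1 * ∏ i : Fin m, f i.succ (q.2 i) :=
      (hf 0).mul_of_nonneg (g := fun y : Fin m → α => ∏ i : Fin m, f i.succ (y i))
        htail.summable (hf₀ 0) fun _ => prod_nonneg fun i _ => hf₀ i.succ _
    have hpair := (hf 0).hasSum.mul htail hprod
    rw [Fin.prod_univ_succ]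
    refine (Equiv.hasSum_iff (Fin.consEquiv fun _ => α)).mp ?_
    simpa [Function.comp_def, Fin.consEquiv, Fin.prod_univ_succ] using hpair

theorem hasSum_fin_prod_pow_of_lt_one {m : ℕ} {r : Fin m → ℝ} (hr₀ : ∀ i, 0 ≤ r i)
    (hr₁ : ∀ i, r i < 1) :
    HasSum (fun k : Fin m → ℕ => ∏ i, r i ^ k i) (∏ i, (1 - r i)⁻¹) := by
  simpa only [tsum_geometric_of_lt_one (hr₀ _) (hr₁ _)] using
    hasSum_fin_prod_of_nonneg (fun i k => pow_nonneg (hr₀ i) k)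
      fun i => summable_geometric_of_lt_one (hr₀ i) (hr₁ i)

theorem sum_cast_linear_comb_mul {ι κ : Type*} [Fintype ι] [Fintype κ] (w : ι → ℝ) (b : ι → ℕ)
    (p : κ → ι → ℕ) (k : κ → ℕ) :
    ∑ j, ((b j + ∑ i, k i * p i j : ℕ) : ℝ) * w j =
      ∑ j, (b j : ℝ) * w j + ∑ i, (k i : ℝ) * ∑ j, (p i j : ℝ) * w j := by
  push_cast
  simp only [add_mul, sum_add_distrib, sum_mul, mul_sum, mul_assoc]
  rw [sum_comm]

theorem exp_neg_mul_sum_linear_comb {ι κ : Type*} [Fintype ι] [Fintype κ] (ε : ℝ) (w : ι → ℝ)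
    (b : ι → ℕ) (p : κ → ι → ℕ) (k : κ → ℕ) :
    Real.exp (-ε * ∑ j, ((b j + ∑ i, k i * p i j : ℕ) : ℝ) * w j) =
      Real.exp (-ε * ∑ j, (b j : ℝ) * w j) * ∏ i, Real.exp (-ε * ∑ j, (p i j : ℝ) * w j) ^ k i := by
  rw [sum_cast_linear_comb_mul, mul_add, Real.exp_add]
  congr 1
  rw [mul_sum, Real.exp_sum]
  refine Fintype.prod_congr _ _ fun i => ?_
  rw [← Real.exp_nat_mul]
  ring_nf

theorem discrete_laplace_simple_linear_set_prob_general (n m : ℕ) (ε : ℝ) (hε : 0 < ε)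
    (a : Fin n → ℚ)
    (b : Fin n → ℕ) (p : Fin m → Fin n → ℕ)
    (hppos : ∀ i, 0 < ∑ j, (p i j : ℝ) * (a j : ℝ))
    (hsimple : Function.Injective
      (fun k : Fin m → ℕ => fun j : Fin n => b j + ∑ i, k i * p i j)) :
    ∑' x : (Set.range (fun k : Fin m → ℕ => fun j : Fin n => b j + ∑ i, k i * p i j)),
        (∏ j, (1 - Real.exp (-((a j : ℝ) * ε))) / (1 + Real.exp (-((a j : ℝ) * ε)))) *
          Real.exp (-ε * ∑ j, ((x : Fin n → ℕ) j : ℝ) * (a j : ℝ)) =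
      (∏ j, (1 - Real.exp (-((a j : ℝ) * ε))) / (1 + Real.exp (-((a j : ℝ) * ε)))) *
        Real.exp (-ε * ∑ j, (b j : ℝ) * (a j : ℝ)) *
        ∏ i, (1 - Real.exp (-ε * ∑ j, (p i j : ℝ) * (a j : ℝ)))⁻¹ := by
  have hr₁ : ∀ i, Real.exp (-ε * ∑ j, (p i j : ℝ) * (a j : ℝ)) < 1 := fun i =>
    Real.exp_lt_one_iff.mpr (by linarith [mul_pos hε (hppos i)])
  rw [tsum_range (fun x : Fin n → ℕ => _ * Real.exp (-ε * ∑ j, (x j : ℝ) * (a j : ℝ))) hsimple]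
  simp only [exp_neg_mul_sum_linear_comb, ← mul_assoc]
  exact ((hasSum_fin_prod_pow_of_lt_one (fun i => (Real.exp_pos _).le) hr₁).mul_left _).tsum_eq

/-- Probability of a multidimensional simple linear set under independent
mean-zero discrete Laplace variables `Yⱼ ~ DLap(aⱼ ε, 0)`: the probability of
`S = {b̄₀ + Σᵢ kᵢ p̄ᵢ}` equals `κ · e^{-ε (b̄₀·ā)} · Πᵢ (1 - e^{-ε (p̄ᵢ·ā)})⁻¹`. -/
theorem discrete_laplace_simple_linear_set_prob (n m : ℕ) (ε : ℝ) (hε : 0 < ε)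
    (a : Fin n → ℚ) (ha : ∀ j, 0 < a j)
    (b : Fin n → ℕ) (p : Fin m → Fin n → ℕ)
    (hppos : ∀ i, 0 < ∑ j, (p i j : ℝ) * (a j : ℝ))
    (hsimple : Function.Injective
      (fun k : Fin m → ℕ => fun j : Fin n => b j + ∑ i, k i * p i j)) :
    ∑' x : (Set.range (fun k : Fin m → ℕ => fun j : Fin n => b j + ∑ i, k i * p i j)),
        (∏ j, (1 - Real.exp (-((a j : ℝ) * ε))) / (1 + Real.exp (-((a j : ℝ) * ε)))) *
          Real.exp (-ε * ∑ j, ((x : Fin n → ℕ) j : ℝ) * (a j : ℝ)) =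
      (∏ j, (1 - Real.exp (-((a j : ℝ) * ε))) / (1 + Real.exp (-((a j : ℝ) * ε)))) *
        Real.exp (-ε * ∑ j, (b j : ℝ) * (a j : ℝ)) *
        ∏ i, (1 - Real.exp (-ε * ∑ j, (p i j : ℝ) * (a j : ℝ)))⁻¹ :=
  discrete_laplace_simple_linear_set_prob_general n m ε hε a b p hppos hsimple
end

section
/- Probability that one Laplace variable exceeds another: let ε > 0, and let X ~ Lap(ε/2, 0) and X₂ ~ Lap(ε/4, 1) be independent with densities (ε/4)e^{-(ε/2)|x|} and (ε/8)e^{-(ε/4)|x-1|}. Then Prob(X₂ ≥ X) is a pseudo-rational function of ε, namely an explicit ratio of finite sums of terms c·ε^n·e^{qε}, computable by the iterated integral ∫∫_{x₂ ≥ x} f_X(x)f_{X₂}(x₂) dx₂ dx. -/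
/-!
The inner integral is the survival function of `Lap(ε/4, 1)`, which has one closed form on
`x ≤ 1` and another on `x > 1`. Splitting the outer integral at `0` and `1` (where `|x|` and the
survival function change branch), the integrand is a combination of two exponentials on each
piece, and the three pieces sum to `1 - (2/3) e^{-ε/4} + e^{-ε/2}/6`. Multiplying numerator and
denominator by `6 e^{ε/2}` makes every exponent nonnegative.
-/

open MeasureTheory

/-- A pseudo-polynomial in ε: a finite sum `Σᵢ aᵢ · ε^{nᵢ} · e^{ε·qᵢ}` with
rational coefficients `aᵢ`, natural exponents `nᵢ`, and nonnegative rational `qᵢ`. -/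
def IsPseudoPoly (f : ℝ → ℝ) : Prop :=
  ∃ (m : ℕ) (a : Fin m → ℚ) (n : Fin m → ℕ) (q : Fin m → ℚ),
    (∀ i, 0 ≤ q i) ∧
    ∀ ε : ℝ, f ε = ∑ i : Fin m, (a i : ℝ) * ε ^ (n i) * Real.exp (ε * (q i : ℝ))

open Real Set

namespace IsPseudoPoly

theorem monomial (a : ℚ) (n : ℕ) {q : ℚ} (hq : 0 ≤ q) :
    IsPseudoPoly fun ε => a * ε ^ n * exp (ε * q) :=
  ⟨1, fun _ => a, fun _ => n, fun _ => q, fun _ => hq, fun ε => by simp⟩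

theorem add {f g : ℝ → ℝ} (hf : IsPseudoPoly f) (hg : IsPseudoPoly g) :
    IsPseudoPoly (f + g) := by
  obtain ⟨m, a, n, q, hq, hf⟩ := hf
  obtain ⟨m', a', n', q', hq', hg⟩ := hg
  refine ⟨m + m', Fin.append a a', Fin.append n n', Fin.append q q',
    Fin.addCases (by simpa using hq) (by simpa using hq'), fun ε => ?_⟩
  simp [Fin.sum_univ_add, hf, hg]

end IsPseudoPoly

theorem integral_exp_mul_of_ne_zero {k : ℝ} (hk : k ≠ 0) (u v : ℝ) :
    ∫ x in u..v, exp (k * x) = (exp (k * v) - exp (k * u)) / k := by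
  rw [intervalIntegral.integral_comp_mul_left (fun x => exp x) hk, integral_exp, smul_eq_mul]
  field_simp

theorem integral_eq_Iic_add_interval_add_Ioi {E : Type*} [NormedAddCommGroup E]
    [NormedSpace ℝ E] {μ : Measure ℝ} {f : ℝ → E} {a b : ℝ} (hab : a ≤ b)
    (hl : IntegrableOn f (Iic a) μ) (hm : IntervalIntegrable f μ a b)
    (hr : IntegrableOn f (Ioi b) μ) :
    ∫ x, f x ∂μ = ∫ x in Iic a, f x ∂μ + ((∫ x in a..b, f x ∂μ) + ∫ x in Ioi b, f x ∂μ) := by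
  have hr' : IntegrableOn f (Ioi a) μ := by
    rw [← Ioc_union_Ioi_eq_Ioi hab]
    exact ((intervalIntegrable_iff_integrableOn_Ioc_of_le hab).1 hm).union hr
  rw [intervalIntegral.integral_interval_add_Ioi' hm hr,
    intervalIntegral.integral_Iic_add_Ioi hl hr']

/-- `P(X ≥ x)` for `X ~ Lap(b, μ)`. -/
noncomputable def laplaceSurvival (b μ x : ℝ) : ℝ :=
  if x ≤ μ then 1 - exp (b * (x - μ)) / 2 else exp (-(b * (x - μ))) / 2

theorem laplace_density_eqOn_Ici (b μ : ℝ) :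
    EqOn (fun t => b / 2 * exp (-b * |t - μ|))
      (fun t => b / 2 * exp (b * μ) * exp (-b * t)) (Ici μ) := by
  intro t ht
  simp only [mul_assoc, ← exp_add, abs_of_nonneg (sub_nonneg.2 (mem_Ici.1 ht))]
  ring_nf

theorem laplace_density_eqOn_Iic (b μ : ℝ) :
    EqOn (fun t => b / 2 * exp (-b * |t - μ|))
      (fun t => b / 2 * exp (-(b * μ)) * exp (b * t)) (Iic μ) := by
  intro t ht
  simp only [mul_assoc, ← exp_add, abs_of_nonpos (sub_nonpos.2 (mem_Iic.1 ht))]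
  ring_nf

theorem integrableOn_Ioi_laplace_density {b : ℝ} (hb : 0 < b) {μ y : ℝ} (hy : μ ≤ y) :
    IntegrableOn (fun t => b / 2 * exp (-b * |t - μ|)) (Ioi y) :=
  IntegrableOn.congr_fun ((integrableOn_exp_mul_Ioi (neg_lt_zero.2 hb) y).const_mul _)
    ((laplace_density_eqOn_Ici b μ).mono (Ioi_subset_Ici hy)).symm measurableSet_Ioi

theorem integral_Ioi_laplace_density {b : ℝ} (hb : 0 < b) {μ y : ℝ} (hy : μ ≤ y) :
    ∫ t in Ioi y, b / 2 * exp (-b * |t - μ|) = exp (-(b * (y - μ))) / 2 := by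
  rw [setIntegral_congr_fun measurableSet_Ioi
      ((laplace_density_eqOn_Ici b μ).mono (Ioi_subset_Ici hy)),
    integral_const_mul, integral_exp_mul_Ioi (neg_lt_zero.2 hb)]
  have hexp : exp (b * μ) * exp (-(b * y)) = exp (-(b * (y - μ))) := by
    rw [← exp_add]; ring_nf
  field_simp
  linear_combination hexp

theorem integral_Ici_laplace_density {b : ℝ} (hb : 0 < b) (μ x : ℝ) :
    ∫ t in Ici x, b / 2 * exp (-b * |t - μ|) = laplaceSurvival b μ x := by
  rw [integral_Ici_eq_integral_Ioi, laplaceSurvival]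
  split_ifs with hx
  · rw [← intervalIntegral.integral_interval_add_Ioi' (Continuous.intervalIntegrable
        (by fun_prop) _ _) (integrableOn_Ioi_laplace_density hb le_rfl),
      integral_Ioi_laplace_density hb le_rfl, intervalIntegral.integral_congr
        ((laplace_density_eqOn_Iic b μ).mono (uIcc_of_le hx ▸ Icc_subset_Iic_self)),
      intervalIntegral.integral_const_mul, integral_exp_mul_of_ne_zero hb.ne']
    have hexp : exp (-(b * μ)) * exp (b * x) = exp (b * (x - μ)) := by
      rw [← exp_add]; ring_nf
    have hinv : exp (-(b * μ)) * exp (b * μ) = 1 := by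
      rw [← exp_add, neg_add_cancel, exp_zero]
    simp only [mul_zero, sub_self, neg_zero, exp_zero]
    field_simp
    linear_combination hinv - hexp
  · exact integral_Ioi_laplace_density hb (not_le.1 hx).le

/-- `P(X₂ ≥ x) · f_X(x)` for `X ~ Lap(ε/2, 0)` and `X₂ ~ Lap(ε/4, 1)`. -/
noncomputable def exceedanceIntegrand (ε x : ℝ) : ℝ :=
  laplaceSurvival (ε / 4) 1 x * (ε / 4 * exp (-(ε / 2) * |x|))

section Exceedance

variable (ε : ℝ)

theorem exceedanceIntegrand_eqOn_Iic :
    EqOn (exceedanceIntegrand ε)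
      (fun x => ε / 4 * exp (ε / 2 * x) - ε / 8 * exp (-(ε / 4)) * exp (3 * ε / 4 * x))
      (Iic 0) := by
  intro x hx
  have hexp : exp (ε / 4 * (x - 1)) * exp (ε / 2 * x) =
      exp (-(ε / 4)) * exp (3 * ε / 4 * x) := by
    rw [← exp_add, ← exp_add]; ring_nf
  rw [exceedanceIntegrand, laplaceSurvival, if_pos (by linarith [mem_Iic.1 hx]),
    abs_of_nonpos hx, neg_mul_neg]
  linear_combination (-(ε / 8)) * hexp

theorem exceedanceIntegrand_eqOn_uIcc :
    EqOn (exceedanceIntegrand ε)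
      (fun x => ε / 4 * exp (-(ε / 2) * x) - ε / 8 * exp (-(ε / 4)) * exp (-(ε / 4) * x))
      (uIcc 0 1) := by
  intro x hx
  rw [uIcc_of_le zero_le_one] at hx
  have hexp : exp (ε / 4 * (x - 1)) * exp (-(ε / 2) * x) =
      exp (-(ε / 4)) * exp (-(ε / 4) * x) := by
    rw [← exp_add, ← exp_add]; ring_nf
  rw [exceedanceIntegrand, laplaceSurvival, if_pos hx.2, abs_of_nonneg hx.1]
  linear_combination (-(ε / 8)) * hexp

theorem exceedanceIntegrand_eqOn_Ioi :
    EqOn (exceedanceIntegrand ε) (fun x => ε / 8 * exp (ε / 4) * exp (-(3 * ε / 4) * x))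
      (Ioi 1) := by
  intro x hx
  have hexp : exp (-(ε / 4 * (x - 1))) * exp (-(ε / 2) * x) =
      exp (ε / 4) * exp (-(3 * ε / 4) * x) := by
    rw [← exp_add, ← exp_add]; ring_nf
  rw [exceedanceIntegrand, laplaceSurvival, if_neg (not_le.2 hx),
    abs_of_pos (zero_lt_one.trans hx)]
  linear_combination (ε / 8) * hexp

variable {ε}

theorem integrableOn_Iic_exceedanceIntegrand (hε : 0 < ε) :
    IntegrableOn (exceedanceIntegrand ε) (Iic 0) :=
  IntegrableOn.congr_fun
    (((integrableOn_exp_mul_Iic (by positivity) 0).const_mul _).sub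
      ((integrableOn_exp_mul_Iic (by positivity) 0).const_mul _))
    (exceedanceIntegrand_eqOn_Iic ε).symm measurableSet_Iic

theorem intervalIntegrable_exceedanceIntegrand :
    IntervalIntegrable (exceedanceIntegrand ε) volume 0 1 :=
  (Continuous.intervalIntegrable (by fun_prop) 0 1).congr
    ((exceedanceIntegrand_eqOn_uIcc ε).symm.mono uIoc_subset_uIcc)

theorem integrableOn_Ioi_exceedanceIntegrand (hε : 0 < ε) :
    IntegrableOn (exceedanceIntegrand ε) (Ioi 1) :=
  IntegrableOn.congr_fun ((integrableOn_exp_mul_Ioi (by linarith) 1).const_mul _)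
    (exceedanceIntegrand_eqOn_Ioi ε).symm measurableSet_Ioi

theorem setIntegral_Iic_exceedanceIntegrand (hε : 0 < ε) :
    ∫ x in Iic 0, exceedanceIntegrand ε x = 1 / 2 - exp (-(ε / 4)) / 6 := by
  have h₁ := integrableOn_exp_mul_Iic (by positivity : 0 < ε / 2) 0
  have h₂ := integrableOn_exp_mul_Iic (by positivity : 0 < 3 * ε / 4) 0
  rw [setIntegral_congr_fun measurableSet_Iic (exceedanceIntegrand_eqOn_Iic ε),
    integral_sub (h₁.const_mul _) (h₂.const_mul _), integral_const_mul, integral_const_mul,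
    integral_exp_mul_Iic (by positivity), integral_exp_mul_Iic (by positivity)]
  simp only [mul_zero, exp_zero]
  field_simp
  ring

theorem integral_interval_exceedanceIntegrand (hε : 0 < ε) :
    ∫ x in (0)..1, exceedanceIntegrand ε x = 1 / 2 - exp (-(ε / 4)) / 2 := by
  have hsq : exp (-(ε / 4)) * exp (-(ε / 4)) = exp (-(ε / 2)) := by
    rw [← exp_add]; ring_nf
  rw [intervalIntegral.integral_congr (exceedanceIntegrand_eqOn_uIcc ε),
    intervalIntegral.integral_sub (Continuous.intervalIntegrable (by fun_prop) _ _)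
      (Continuous.intervalIntegrable (by fun_prop) _ _),
    intervalIntegral.integral_const_mul, intervalIntegral.integral_const_mul,
    integral_exp_mul_of_ne_zero (neg_ne_zero.2 (by positivity)),
    integral_exp_mul_of_ne_zero (neg_ne_zero.2 (by positivity))]
  simp only [mul_zero, mul_one, exp_zero, ← hsq]
  field_simp
  ring

theorem setIntegral_Ioi_exceedanceIntegrand (hε : 0 < ε) :
    ∫ x in Ioi 1, exceedanceIntegrand ε x = exp (-(ε / 2)) / 6 := by
  have hexp : exp (ε / 4) * exp (-(3 * ε / 4)) = exp (-(ε / 2)) := by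
    rw [← exp_add]; ring_nf
  rw [setIntegral_congr_fun measurableSet_Ioi (exceedanceIntegrand_eqOn_Ioi ε),
    integral_const_mul, integral_exp_mul_Ioi (by linarith), mul_one, ← hexp]
  field_simp
  ring

theorem integral_exceedanceIntegrand (hε : 0 < ε) :
    ∫ x, exceedanceIntegrand ε x = 1 - 2 / 3 * exp (-(ε / 4)) + exp (-(ε / 2)) / 6 := by
  rw [integral_eq_Iic_add_interval_add_Ioi zero_le_one
      (integrableOn_Iic_exceedanceIntegrand hε) intervalIntegrable_exceedanceIntegrand
      (integrableOn_Ioi_exceedanceIntegrand hε),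
    setIntegral_Iic_exceedanceIntegrand hε, integral_interval_exceedanceIntegrand hε,
    setIntegral_Ioi_exceedanceIntegrand hε]
  ring

theorem integral_laplace_exceeds (hε : 0 < ε) :
    (∫ x : ℝ, (∫ x₂ in Ici x, (ε / 8) * exp (-(ε / 4) * |x₂ - 1|)) *
        ((ε / 4) * exp (-(ε / 2) * |x|))) =
      1 - 2 / 3 * exp (-(ε / 4)) + exp (-(ε / 2)) / 6 := by
  have hinner (x : ℝ) :
      ∫ x₂ in Ici x, ε / 8 * exp (-(ε / 4) * |x₂ - 1|) = laplaceSurvival (ε / 4) 1 x := by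
    rw [← integral_Ici_laplace_density (by positivity)]
    norm_num [div_div]
  simp_rw [hinner]
  exact integral_exceedanceIntegrand hε

end Exceedance

/-- For independent `X ~ Lap(ε/2, 0)` and `X₂ ~ Lap(ε/4, 1)`, the probability
`Prob(X₂ ≥ X)`, computed by the iterated integral of the joint density over
`{x₂ ≥ x}`, is a pseudo-rational function of ε. -/
theorem prob_laplace_exceeds_is_pseudo_rational :
    ∃ p q : ℝ → ℝ, IsPseudoPoly p ∧ IsPseudoPoly q ∧
      (∀ ε : ℝ, 0 < ε → q ε ≠ 0) ∧
      ∀ ε : ℝ, 0 < ε →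
        (∫ x : ℝ, (∫ x₂ in Set.Ici x, (ε / 8) * Real.exp (-(ε / 4) * |x₂ - 1|)) *
            ((ε / 4) * Real.exp (-(ε / 2) * |x|))) = p ε / q ε := by
  refine ⟨fun ε => 6 * exp (ε / 2) - 4 * exp (ε / 4) + 1, fun ε => 6 * exp (ε / 2),
    ?_, ?_, fun ε _ => by positivity, fun ε hε => ?_⟩
  · convert ((IsPseudoPoly.monomial 6 0 (q := 1 / 2) (by norm_num)).add
      (IsPseudoPoly.monomial (-4) 0 (q := 1 / 4) (by norm_num))).add
      (IsPseudoPoly.monomial 1 0 le_rfl) using 1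
    funext ε
    push_cast [Pi.add_apply, pow_zero, mul_zero, exp_zero]
    ring_nf
  · convert IsPseudoPoly.monomial 6 0 (q := 1 / 2) (by norm_num) using 1
    funext ε
    push_cast
    ring_nf
  · have hsq : exp (ε / 2) = exp (ε / 4) ^ 2 := by
      rw [← exp_nat_mul]; ring_nf
    beta_reduce
    rw [integral_laplace_exceeds hε, exp_neg, exp_neg, hsq]
    field_simp
    ring
end

section
/- The faulty randomized response (flip with probability (1-ε)/2) is not ε-differentially private: there exists ε₀ > 0 (e.g. any ε₀ ∈ (0,1) with (1+ε₀)/(1-ε₀) > e^{ε₀}, such as ε₀ = 9/34) such that Prob(RR'(⊥) = ⊥) > e^{ε₀}·Prob(RR'(⊤) = ⊥), where Prob(RR'(b)=b) = (1+ε)/2 and Prob(RR'(b)=¬b) = (1-ε)/2. -/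
/-- The faulty randomized response (output the input with probability `(1+ε)/2`
and flip it with probability `(1-ε)/2`) is not ε-differentially private: there
is some `ε₀ ∈ (0,1)` for which the defining inequality fails on the adjacent
pair `(⊥, ⊤)` and output `⊥`. -/
theorem faulty_randomized_response_not_private :
    ∃ ε₀ : ℝ, 0 < ε₀ ∧ ε₀ < 1 ∧
      (1 + ε₀) / 2 > Real.exp ε₀ * ((1 - ε₀) / 2) := by
  refine ⟨1/2, by norm_num, by norm_num, ?_⟩
  have h : (1 : ℝ) - 1/2 < Real.exp (-(1/2)) := by
    have := Real.add_one_lt_exp (x := (-(1/2) : ℝ)) (by norm_num)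
    linarith
  have hexp : Real.exp (1/2) * ((1 - 1/2)) < 1 := by
    have := mul_lt_mul_of_pos_left h (Real.exp_pos (1/2))
    rwa [← Real.exp_add, add_neg_cancel, Real.exp_zero] at this
  nlinarith [Real.exp_pos (1/2 : ℝ)]
end
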